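/- arXiv:0805.3839 — 2 statements merged into one kernel-verified Lean document; each statement's English description precedes it below -/
import Mathlib

section
/- Let f, g ∈ ℂ[x₁,…,xₙ] be homogeneous of degree d with J_f = J_g, and set f_t = (1−t)f + t·g. Then the set of t ∈ ℂ for which the ℂ-span of {xⱼ·∂f_t/∂xᵢ : 1 ≤ i,j ≤ n} is a proper subspace of J_f ∩ ℂ[x₁,…,xₙ]_d is finite. -/
open MvPolynomial

noncomputable def jacobianIdeal {n : ℕ} (f : MvPolynomial (Fin n) ℂ) :
    Ideal (MvPolynomial (Fin n) ℂ) :=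
  Ideal.span (Set.range fun i => pderiv i f)

/-! Write `X j * ∂ᵢ f_t = a + t • w` with `a = X j * ∂ᵢ f` and `w = X j * ∂ᵢ g - X j * ∂ᵢ f`; both
families lie in the finite-dimensional space `V = J_f ∩ ℂ[x]_d`, and `a` spans `V` because the
degree-`d` part of an ideal generated in degree `d - 1` is spanned by the generators times the
variables. If `σ` is a right inverse of the coefficient map of `a` and `A` is the coefficient map
of `w` composed with `σ`, the family `a + t • w` can fail to span `V` only when `1 + t A` is
singular, i.e. when `-t⁻¹` is an eigenvalue of `A`; there are finitely many such `t`. -/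

theorem LinearMap.finite_setOf_not_surjective_add_smul {K V W : Type*} [Field K]
    [AddCommGroup V] [Module K V] [FiniteDimensional K V] [AddCommGroup W] [Module K W]
    (L₀ L₁ : W →ₗ[K] V) (h₀ : Function.Surjective L₀) :
    {t : K | ¬ Function.Surjective (L₀ + t • L₁)}.Finite := by
  obtain ⟨σ, hσ⟩ := L₀.exists_rightInverse_of_surjective (range_eq_top.2 h₀)
  set A := L₁ ∘ₗ σ
  refine ((Module.End.finite_hasEigenvalue A).image fun μ => -μ⁻¹).subset fun t ht => ?_
  have hcomp : (L₀ + t • L₁) ∘ₗ σ = LinearMap.id + t • A := by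
    rw [add_comp, smul_comp, hσ]
  have hnotinj : ¬ Function.Injective (LinearMap.id + t • A : Module.End K V) := fun hinj =>
    ht (Function.Surjective.of_comp (g := σ) (by
      rw [← coe_comp, hcomp]; exact injective_iff_surjective.1 hinj))
  obtain ⟨x, hx, hx0⟩ := (Submodule.ne_bot_iff _).1 (mt ker_eq_bot.1 hnotinj)
  have hxA : x + t • A x = 0 := hx
  have ht0 : t ≠ 0 := by rintro rfl; simp_all
  refine ⟨-t⁻¹, Module.End.hasEigenvalue_of_hasEigenvector ⟨?_, hx0⟩, by simp⟩
  rw [Module.End.mem_eigenspace_iff, neg_smul, eq_neg_iff_add_eq_zero, ← smul_right_inj ht0,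
    smul_add, smul_inv_smul₀ ht0, add_comm, smul_zero]
  exact hxA

theorem Submodule.finite_setOf_span_range_add_smul_ne {K M ι : Type*} [Field K]
    [AddCommGroup M] [Module K M] (P : Submodule K M) [FiniteDimensional K P]
    (v w : ι → M) (hv : span K (Set.range v) = P) (hw : ∀ i, w i ∈ P) :
    {t : K | span K (Set.range fun i => v i + t • w i) ≠ P}.Finite := by
  have hv' (c : ι →₀ K) : Finsupp.linearCombination K v c ∈ P :=
    hv ▸ Finsupp.range_linearCombination K (v := v) ▸ LinearMap.mem_range_self _ c
  have hw' (c : ι →₀ K) : Finsupp.linearCombination K w c ∈ P :=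
    span_le.2 (Set.range_subset_iff.2 hw)
      (Finsupp.range_linearCombination K (v := w) ▸ LinearMap.mem_range_self _ c)
  set L₀ := (Finsupp.linearCombination K v).codRestrict P hv'
  set L₁ := (Finsupp.linearCombination K w).codRestrict P hw'
  have h₀ : Function.Surjective L₀ := by
    rw [← LinearMap.range_eq_top, LinearMap.range_codRestrict, Finsupp.range_linearCombination, hv,
      comap_subtype_self]
  refine (L₀.finite_setOf_not_surjective_add_smul L₁ h₀).subset fun t ht hsurj => ht ?_
  have hcomb : P.subtype ∘ₗ (L₀ + t • L₁) = Finsupp.linearCombination K fun i => v i + t • w i := by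
    ext i; simp [L₀, L₁]
  rw [← Finsupp.range_linearCombination, ← hcomb, LinearMap.range_comp,
    LinearMap.range_eq_top.2 hsurj, map_top, range_subtype]

namespace MvPolynomial

variable {σ R : Type*} [CommSemiring R]

theorem setOf_exists_eq_X_mul_pderiv (φ : MvPolynomial σ R) :
    {p | ∃ i j, p = X j * pderiv i φ} = Set.range fun ij : σ × σ => X ij.2 * pderiv ij.1 φ := by
  ext p
  simp only [Set.mem_ofPred_eq, Set.mem_range, Prod.exists, eq_comm]

theorem homogeneousComponent_add_mul {q : MvPolynomial σ R} {e : ℕ} (hq : q.IsHomogeneous e)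
    (c : MvPolynomial σ R) (k : ℕ) :
    homogeneousComponent (k + e) (c * q) = homogeneousComponent k c * q := by
  let _ := gradedAlgebra (σ := σ) (R := R)
  have h := DirectSum.coe_decompose_mul_of_right_mem_of_le (𝒜 := homogeneousSubmodule σ R) (a := c)
    hq (Nat.le_add_left e k)
  simp only [← decomposition.decompose'_apply] at h ⊢
  rwa [Nat.add_sub_cancel] at h

theorem IsHomogeneous.X_mul_pderiv {φ : MvPolynomial σ R} {n : ℕ} (h : φ.IsHomogeneous n)
    (i j : σ) : (X j * pderiv i φ).IsHomogeneous n := by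
  obtain _ | n := n
  · rw [← totalDegree_zero_iff_isHomogeneous, totalDegree_eq_zero_iff_eq_C] at h
    rw [h, pderiv_C, mul_zero]
    exact isHomogeneous_zero _ _ _
  · rw [add_comm]
    exact (isHomogeneous_X R j).mul h.pderiv

theorem span_X_mul_eq_inf_homogeneousSubmodule {ι : Type*} {q : ι → MvPolynomial σ R} {e : ℕ}
    (hq : ∀ i, (q i).IsHomogeneous e) :
    Submodule.span R (Set.range fun p : ι × σ => X p.2 * q p.1) =
      (Ideal.span (Set.range q)).restrictScalars R ⊓ homogeneousSubmodule σ R (e + 1) := by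
  set S := Set.range fun p : ι × σ => X p.2 * q p.1
  apply le_antisymm
  · rw [Submodule.span_le]
    rintro _ ⟨⟨i, j⟩, rfl⟩
    have hdeg := (isHomogeneous_X R j).mul (hq i)
    rw [add_comm] at hdeg
    exact ⟨Ideal.mul_mem_left _ _ (Ideal.subset_span ⟨i, rfl⟩), hdeg⟩
  · rintro p ⟨hpJ, hpd⟩
    obtain ⟨c, rfl⟩ := Finsupp.mem_ideal_span_range_iff_exists_finsupp.1 hpJ
    have hlin (i : ι) {a : MvPolynomial σ R} (ha : a ∈ homogeneousSubmodule σ R 1) :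
        a * q i ∈ Submodule.span R S := by
      rw [homogeneousSubmodule_one_eq_span_X] at ha
      have := Submodule.mem_map_of_mem (f := LinearMap.mulRight R (q i)) ha
      rw [Submodule.map_span, ← Set.range_comp] at this
      exact Submodule.span_mono (Set.range_subset_iff.2 fun j => Set.mem_range.2 ⟨(i, j), rfl⟩) this
    rw [← homogeneousComponent_eq_self hpd, Finsupp.sum, map_sum]
    refine Submodule.sum_mem _ fun i _ => ?_
    rw [add_comm, homogeneousComponent_add_mul (hq i)]
    exact hlin i (homogeneousComponent_mem 1 _)

end MvPolynomial

theorem span_X_mul_pderiv_eq {n d : ℕ} {f : MvPolynomial (Fin n) ℂ} (hf : f.IsHomogeneous d) :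
    Submodule.span ℂ (Set.range fun ij : Fin n × Fin n => X ij.2 * pderiv ij.1 f) =
      (jacobianIdeal f).restrictScalars ℂ ⊓ homogeneousSubmodule (Fin n) ℂ d := by
  obtain _ | e := d
  · rw [← totalDegree_zero_iff_isHomogeneous, totalDegree_eq_zero_iff_eq_C] at hf
    have h0 (i : Fin n) : pderiv i f = 0 := by rw [hf, pderiv_C]
    simp only [jacobianIdeal, h0, mul_zero]
    rw [Submodule.span_eq_bot.2 (by simp), Ideal.span_eq_bot.2 (by simp),
      Submodule.restrictScalars_bot, bot_inf_eq]
  · have hq (i : Fin n) : (pderiv i f).IsHomogeneous e := hf.pderiv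
    exact (span_X_mul_eq_inf_homogeneousSubmodule hq :)

theorem span_proper_finite {n d : ℕ} (f g : MvPolynomial (Fin n) ℂ)
    (hf : f.IsHomogeneous d) (hg : g.IsHomogeneous d)
    (hJ : jacobianIdeal f = jacobianIdeal g) :
    {t : ℂ | Submodule.span ℂ
        {p : MvPolynomial (Fin n) ℂ | ∃ i j, p = X j * pderiv i ((1 - t) • f + t • g)} <
      Submodule.restrictScalars ℂ (jacobianIdeal f) ⊓
        homogeneousSubmodule (Fin n) ℂ d}.Finite := by
  set V := (jacobianIdeal f).restrictScalars ℂ ⊓ homogeneousSubmodule (Fin n) ℂ d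
  have : FiniteDimensional ℂ (homogeneousSubmodule (Fin n) ℂ d) :=
    Module.Finite.iff_fg.2 (homogeneousSubmodule_fg _ _ d)
  have : FiniteDimensional ℂ V := Submodule.finiteDimensional_of_le inf_le_right
  set a : Fin n × Fin n → MvPolynomial (Fin n) ℂ := fun ij => X ij.2 * pderiv ij.1 f
  set b : Fin n × Fin n → MvPolynomial (Fin n) ℂ := fun ij => X ij.2 * pderiv ij.1 g
  have hspan : Submodule.span ℂ (Set.range a) = V := span_X_mul_pderiv_eq hf
  have ha (ij) : a ij ∈ V := hspan ▸ Submodule.subset_span ⟨ij, rfl⟩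
  have hb (ij) : b ij ∈ V :=
    ⟨Ideal.mul_mem_left _ _ (hJ ▸ Ideal.subset_span ⟨ij.1, rfl⟩), hg.X_mul_pderiv ij.1 ij.2⟩
  refine (V.finite_setOf_span_range_add_smul_ne a (b - a) hspan
    fun ij => sub_mem (hb ij) (ha ij)).subset fun t ht => ?_
  have hfamily : (fun ij : Fin n × Fin n => X ij.2 * pderiv ij.1 ((1 - t) • f + t • g)) =
      fun ij => a ij + t • (b - a) ij := by
    ext1 ij
    simp only [a, b, Pi.sub_apply, Derivation.map_add, Derivation.map_smul, mul_add,
      mul_smul_comm]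
    module
  rw [Set.mem_ofPred_eq, setOf_exists_eq_X_mul_pderiv, hfamily] at ht
  exact ht.ne
end

section
/- Let f, g ∈ ℂ[x₁,…,xₙ] be homogeneous of degree d ≥ 3, and suppose there is an isomorphism of graded ℂ-algebras φ: ℂ[x₁,…,xₙ]/J_g → ℂ[x₁,…,xₙ]/J_f between their Milnor algebras. Then φ is induced by a degree-preserving ℂ-algebra automorphism u* of ℂ[x₁,…,xₙ] (i.e., a linear change of variables) satisfying u*(J_g) = J_f. -/
open MvPolynomial

/-!
Since `d ≥ 3`, `J_g` is generated in degree `d - 1 ≥ 2`, so it contains no nonzero linear form.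
Lifting the images of the variables to linear forms `qᵢ` gives a substitution `u* = aeval q` with
`φ ∘ mk = mk ∘ u*`; it is injective on the finite-dimensional space of linear forms, hence
bijective there, and a linear substitution that is bijective on linear forms is an automorphism.
Finally `u*(J_g) = J_f` because `J_g = u*⁻¹(J_f)`, both being the kernel of
`φ ∘ mk = mk ∘ u*`.
-/

namespace MvPolynomial

section CommSemiring

variable {σ R : Type*} [CommSemiring R] {p : MvPolynomial σ R} {k n : ℕ}

theorem IsHomogeneous.mem_pow_idealOfVars (hp : p.IsHomogeneous n) :
    p ∈ idealOfVars σ R ^ n :=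
  (mem_pow_idealOfVars_iff n p).2 fun _ hm => (hp.degree_eq_sum_deg_support hm).le

theorem IsHomogeneous.eq_zero_of_mem_pow_idealOfVars (hp : p.IsHomogeneous k) (hkn : k < n)
    (hmem : p ∈ idealOfVars σ R ^ n) : p = 0 := by
  ext m
  rw [coeff_zero]
  obtain hm | hm := eq_or_ne m.degree k
  · exact (mem_pow_idealOfVars_iff' n p).1 hmem m (hm ▸ hkn)
  · exact hp.coeff_eq_zero hm

end CommSemiring

section Field

variable {σ K : Type*} [Field K] [Finite σ] {q : σ → MvPolynomial σ K}

theorem exists_isHomogeneous_one_aeval_eq (hq : ∀ i, (q i).IsHomogeneous 1)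
    (hinj : ∀ p : MvPolynomial σ K, p.IsHomogeneous 1 → aeval q p = 0 → p = 0)
    {r : MvPolynomial σ K} (hr : r.IsHomogeneous 1) :
    ∃ p : MvPolynomial σ K, p.IsHomogeneous 1 ∧ aeval q p = r := by
  have : Module.Finite K (homogeneousSubmodule σ K 1) :=
    Module.Finite.iff_fg.mpr (homogeneousSubmodule_fg σ K 1)
  let T := (aeval q).toLinearMap.restrict (p := homogeneousSubmodule σ K 1)
    (q := homogeneousSubmodule σ K 1) fun p hp => by simpa using hp.aeval q hq
  have hT : Function.Injective T := by
    rw [← LinearMap.ker_eq_bot, LinearMap.ker_eq_bot']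
    rintro ⟨p, hp⟩ h
    exact Subtype.ext (hinj p hp (congrArg Subtype.val h))
  obtain ⟨⟨p, hp⟩, hpr⟩ := LinearMap.injective_iff_surjective.mp hT ⟨r, hr⟩
  exact ⟨p, hp, congrArg Subtype.val hpr⟩

theorem bijective_aeval_of_isHomogeneous_one (hq : ∀ i, (q i).IsHomogeneous 1)
    (hinj : ∀ p : MvPolynomial σ K, p.IsHomogeneous 1 → aeval q p = 0 → p = 0) :
    Function.Bijective (aeval (R := K) q) := by
  choose r hr hqr using fun j => exists_isHomogeneous_one_aeval_eq hq hinj (isHomogeneous_X K j)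
  have hright : (aeval q).comp (aeval r) = AlgHom.id K (MvPolynomial σ K) :=
    algHom_ext fun j => by rw [AlgHom.comp_apply, aeval_X, hqr, AlgHom.id_apply]
  have hleft : (aeval r).comp (aeval q) = AlgHom.id K (MvPolynomial σ K) :=
    algHom_ext fun i => by
      have hri : (aeval r (q i)).IsHomogeneous 1 := by simpa using (hq i).aeval r hr
      have h0 : aeval q (aeval r (q i) - X i) = 0 := by
        rw [map_sub, ← AlgHom.comp_apply, hright, AlgHom.id_apply, aeval_X, sub_self]
      rw [AlgHom.comp_apply, aeval_X, AlgHom.id_apply]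
      exact sub_eq_zero.mp (hinj _ (hri.sub (isHomogeneous_X K i)) h0)
  exact (AlgEquiv.ofAlgHom _ _ hright hleft).bijective

theorem exists_algEquiv_lift_of_quotient_algEquiv {I J : Ideal (MvPolynomial σ K)}
    (hJ : ∀ p ∈ J, p.IsHomogeneous 1 → p = 0)
    (φ : (MvPolynomial σ K ⧸ J) ≃ₐ[K] (MvPolynomial σ K ⧸ I))
    (hφ : ∀ i, ∃ q : MvPolynomial σ K, q.IsHomogeneous 1 ∧
      φ (Ideal.Quotient.mk J (X i)) = Ideal.Quotient.mk I q) :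
    ∃ U : MvPolynomial σ K ≃ₐ[K] MvPolynomial σ K, (∀ i, (U (X i)).IsHomogeneous 1) ∧
      ∀ p, φ (Ideal.Quotient.mk J p) = Ideal.Quotient.mk I (U p) := by
  choose q hq hφq using hφ
  have hcomp : (φ : _ →ₐ[K] _).comp (Ideal.Quotient.mkₐ K J) =
      (Ideal.Quotient.mkₐ K I).comp (aeval q) :=
    algHom_ext fun i => by simpa using hφq i
  have hφmk (p : MvPolynomial σ K) :
      φ (Ideal.Quotient.mk J p) = Ideal.Quotient.mk I (aeval q p) :=
    DFunLike.congr_fun hcomp p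
  have hinj (p : MvPolynomial σ K) (hp : p.IsHomogeneous 1) (h0 : aeval q p = 0) : p = 0 :=
    hJ p (by rw [← Ideal.Quotient.eq_zero_iff_mem, ← map_eq_zero_iff φ φ.injective, hφmk, h0,
      map_zero]) hp
  refine ⟨AlgEquiv.ofBijective (aeval q) (bijective_aeval_of_isHomogeneous_one hq hinj),
    fun i => ?_, hφmk⟩
  simpa using hq i

end Field

end MvPolynomial

theorem Ideal.map_eq_of_quotient_ringEquiv {R S F : Type*} [CommRing R] [CommRing S]
    [EquivLike F R S] [RingEquivClass F R S] {I : Ideal R} {J : Ideal S}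
    (φ : R ⧸ I ≃+* S ⧸ J) (U : F)
    (hU : ∀ p, φ (Ideal.Quotient.mk I p) = Ideal.Quotient.mk J (U p)) :
    I.map U = J := by
  have hI : I = J.comap U := by
    ext p
    rw [Ideal.mem_comap, ← Ideal.Quotient.eq_zero_iff_mem, ← Ideal.Quotient.eq_zero_iff_mem,
      ← hU, map_eq_zero_iff φ φ.injective]
  rw [hI, Ideal.map_comap_of_surjective U (EquivLike.surjective U)]

theorem MvPolynomial.IsHomogeneous.jacobianIdeal_le_pow_idealOfVars {n d : ℕ}
    {f : MvPolynomial (Fin n) ℂ} (hf : f.IsHomogeneous d) :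
    jacobianIdeal f ≤ idealOfVars (Fin n) ℂ ^ (d - 1) :=
  Ideal.span_le.mpr <| Set.range_subset_iff.mpr fun _ => hf.pderiv.mem_pow_idealOfVars

theorem graded_iso_induced_by_linear_general {n d : ℕ} (hd : 3 ≤ d)
    (f g : MvPolynomial (Fin n) ℂ) (hg : g.IsHomogeneous d)
    (φ : (MvPolynomial (Fin n) ℂ ⧸ jacobianIdeal g) ≃ₐ[ℂ]
         (MvPolynomial (Fin n) ℂ ⧸ jacobianIdeal f))
    (hφ : ∀ (k : ℕ) (p : MvPolynomial (Fin n) ℂ), p.IsHomogeneous k →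
      ∃ q : MvPolynomial (Fin n) ℂ, q.IsHomogeneous k ∧
        φ (Ideal.Quotient.mk (jacobianIdeal g) p) = Ideal.Quotient.mk (jacobianIdeal f) q) :
    ∃ U : MvPolynomial (Fin n) ℂ ≃ₐ[ℂ] MvPolynomial (Fin n) ℂ,
      (∀ i, (U (X i)).IsHomogeneous 1) ∧
      Ideal.map (U : MvPolynomial (Fin n) ℂ →ₐ[ℂ] MvPolynomial (Fin n) ℂ)
        (jacobianIdeal g) = jacobianIdeal f ∧
      ∀ p : MvPolynomial (Fin n) ℂ,
        φ (Ideal.Quotient.mk (jacobianIdeal g) p) =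
          Ideal.Quotient.mk (jacobianIdeal f) (U p) := by
  have hlinear : ∀ p ∈ jacobianIdeal g, p.IsHomogeneous 1 → p = 0 := fun p hp h1 =>
    h1.eq_zero_of_mem_pow_idealOfVars (by omega) (hg.jacobianIdeal_le_pow_idealOfVars hp)
  obtain ⟨U, hUX, hU⟩ := exists_algEquiv_lift_of_quotient_algEquiv hlinear φ
    fun i => hφ 1 (X i) (isHomogeneous_X ℂ i)
  exact ⟨U, hUX, Ideal.map_eq_of_quotient_ringEquiv φ.toRingEquiv U hU, hU⟩

theorem graded_iso_induced_by_linear {n d : ℕ} (hd : 3 ≤ d)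
    (f g : MvPolynomial (Fin n) ℂ) (hf : f.IsHomogeneous d) (hg : g.IsHomogeneous d)
    (φ : (MvPolynomial (Fin n) ℂ ⧸ jacobianIdeal g) ≃ₐ[ℂ]
         (MvPolynomial (Fin n) ℂ ⧸ jacobianIdeal f))
    (hφ : ∀ (k : ℕ) (p : MvPolynomial (Fin n) ℂ), p.IsHomogeneous k →
      ∃ q : MvPolynomial (Fin n) ℂ, q.IsHomogeneous k ∧
        φ (Ideal.Quotient.mk (jacobianIdeal g) p) = Ideal.Quotient.mk (jacobianIdeal f) q) :
    ∃ U : MvPolynomial (Fin n) ℂ ≃ₐ[ℂ] MvPolynomial (Fin n) ℂ,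
      (∀ i, (U (X i)).IsHomogeneous 1) ∧
      Ideal.map (U : MvPolynomial (Fin n) ℂ →ₐ[ℂ] MvPolynomial (Fin n) ℂ)
        (jacobianIdeal g) = jacobianIdeal f ∧
      ∀ p : MvPolynomial (Fin n) ℂ,
        φ (Ideal.Quotient.mk (jacobianIdeal g) p) =
          Ideal.Quotient.mk (jacobianIdeal f) (U p) :=
  graded_iso_induced_by_linear_general hd f g hg φ hφ
end
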